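/- arXiv:2303.11136 — 2 statements merged into one kernel-verified Lean document; each statement's English description precedes it below -/
import Mathlib

section
/- Let (X, d_X) and (Y, d_Y) be compact metric spaces, let p : X × X × (0,∞) → (0,∞) be a kernel, and let q : Y × Y × (0,∞) → (0,∞) be a kernel that is continuous in its first two variables (for each fixed t > 0). Assume both p and q satisfy the Varadhan asymptotics: −4t·log p(x, x', t) → d_X(x, x')² and −4t·log q(y, y', t) → d_Y(y, y')² as t → 0⁺, for all points of X and Y respectively. Suppose there exist maps f_i : X → Y (i = 1, 2, …), not necessarily continuous, such that e^{−(t+1/t)}·|q(f_i(x), f_i(x'), t) − p(x, x', t)| < 1/i for all x, x' ∈ X and all t > 0. Then there exists a distance-preserving map f : X → Y, i.e. d_Y(f(x), f(x')) = d_X(x, x') for all x, x' ∈ X. -/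
open Filter Set

/-- From a sequence of rougher and rougher kernel-almost-preserving maps between
compact metric spaces whose kernels satisfy the Varadhan asymptotics, one can
extract a distance-preserving map. -/
theorem exists_isometry_of_kernel_approximations
    {X Y : Type*} [MetricSpace X] [CompactSpace X] [MetricSpace Y] [CompactSpace Y]
    (p : X → X → ℝ → ℝ) (q : Y → Y → ℝ → ℝ)
    (hp_pos : ∀ x x' : X, ∀ t : ℝ, 0 < t → 0 < p x x' t)
    (hq_pos : ∀ y y' : Y, ∀ t : ℝ, 0 < t → 0 < q y y' t)
    (hq_cont : ∀ t : ℝ, 0 < t → Continuous fun z : Y × Y => q z.1 z.2 t)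
    (hp_var : ∀ x x' : X,
      Tendsto (fun t : ℝ => -4 * t * Real.log (p x x' t)) (nhdsWithin 0 (Ioi 0))
        (nhds ((dist x x') ^ 2)))
    (hq_var : ∀ y y' : Y,
      Tendsto (fun t : ℝ => -4 * t * Real.log (q y y' t)) (nhdsWithin 0 (Ioi 0))
        (nhds ((dist y y') ^ 2)))
    (F : ℕ → X → Y)
    (hF : ∀ i : ℕ, ∀ x x' : X, ∀ t : ℝ, 0 < t →
      Real.exp (-(t + 1 / t)) * |q (F i x) (F i x') t - p x x' t| < 1 / (i + 1)) :
    ∃ f : X → Y, ∀ x x' : X, dist (f x) (f x') = dist x x' := by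
  classical
  set U : Ultrafilter ℕ := Filter.hyperfilter ℕ with hUdef
  have hUle : (U : Filter ℕ) ≤ atTop := by
    rw [← Nat.cofinite_eq_atTop]
    exact Filter.hyperfilter_le_cofinite
  have hex : ∀ x : X, ∃ y : Y, Tendsto (fun i => F i x) (U : Filter ℕ) (nhds y) := by
    intro x
    obtain ⟨y, -, hy⟩ := isCompact_univ.ultrafilter_le_nhds
      (U.map fun i => F i x) (by simp)
    exact ⟨y, hy⟩
  choose f hf using hex
  refine ⟨f, fun x x' => ?_⟩
  have key : ∀ t : ℝ, 0 < t → q (f x) (f x') t = p x x' t := by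
    intro t ht
    have hpair : Tendsto (fun i => (F i x, F i x')) (U : Filter ℕ) (nhds (f x, f x')) :=
      (hf x).prodMk_nhds (hf x')
    have h1 : Tendsto (fun i => q (F i x) (F i x') t) (U : Filter ℕ)
        (nhds (q (f x) (f x') t)) :=
      ((hq_cont t ht).tendsto (f x, f x')).comp hpair
    have h2 : Tendsto (fun i => q (F i x) (F i x') t - p x x' t) (U : Filter ℕ) (nhds 0) := by
      have hbound : ∀ i : ℕ, ‖q (F i x) (F i x') t - p x x' t‖ ≤
          Real.exp (t + 1 / t) * (1 / (i + 1)) := by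
        intro i
        have h := (hF i x x' t ht).le
        have hpos : (0 : ℝ) < Real.exp (-(t + 1 / t)) := Real.exp_pos _
        rw [Real.norm_eq_abs]
        calc |q (F i x) (F i x') t - p x x' t|
            = Real.exp (t + 1 / t) * (Real.exp (-(t + 1 / t)) *
              |q (F i x) (F i x') t - p x x' t|) := by
              rw [← mul_assoc, ← Real.exp_add, add_neg_cancel, Real.exp_zero, one_mul]
          _ ≤ Real.exp (t + 1 / t) * (1 / (i + 1)) :=
              mul_le_mul_of_nonneg_left h (Real.exp_pos _).le
      have hg : Tendsto (fun i : ℕ => Real.exp (t + 1 / t) * (1 / (i + 1))) atTop (nhds 0) := by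
        have := tendsto_one_div_add_atTop_nhds_zero_nat.const_mul (Real.exp (t + 1 / t))
        simpa using this
      exact squeeze_zero_norm hbound (hg.mono_left hUle)
    have h3 : Tendsto (fun i => q (F i x) (F i x') t) (U : Filter ℕ) (nhds (p x x' t)) := by
      have := h2.add_const (p x x' t)
      simpa using this
    exact tendsto_nhds_unique h1 h3
  have heq : (fun t : ℝ => -4 * t * Real.log (q (f x) (f x') t)) =ᶠ[nhdsWithin 0 (Ioi 0)]
      (fun t : ℝ => -4 * t * Real.log (p x x' t)) := by
    filter_upwards [self_mem_nhdsWithin] with t ht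
    rw [key t ht]
  have hsq : (dist (f x) (f x')) ^ 2 = (dist x x') ^ 2 :=
    tendsto_nhds_unique ((hq_var (f x) (f x')).congr' heq)
      (hp_var x x')
  nlinarith [dist_nonneg (x := f x) (y := f x'), dist_nonneg (x := x) (y := x'),
    sq_nonneg (dist (f x) (f x') - dist x x'), sq_nonneg (dist (f x) (f x') + dist x x')]
end

section
/- Let X and Y be nonempty compact metric spaces and let I : X → ℓ² and J : Y → ℓ² be continuous maps into the Hilbert space ℓ² of square-summable real sequences, and let ε > 0. (a) If the image I(X) is contained in the open ε-neighbourhood of J(Y), then there exists a map f : X → Y with ‖I(x) − J(f(x))‖ < 5ε for all x ∈ X. (b) If the Hausdorff distance between I(X) and J(Y) in ℓ² is strictly less than ε, then there exists a map f : X → Y such that ‖I(x) − J(f(x))‖ < 5ε for all x ∈ X and, in addition, for every y ∈ Y there exists x ∈ X with ‖J(f(x)) − J(y)‖ < 5ε. -/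
open Filter Set Metric

section

variable {X Y E : Type*} [PseudoMetricSpace E] {I : X → E} {J : Y → E} {ε : ℝ}

theorem exists_dist_lt_of_range_subset_thickening (h : range I ⊆ thickening ε (range J)) :
    ∃ f : X → Y, ∀ x, dist (I x) (J (f x)) < ε := by
  have hclose : ∀ x, ∃ y, dist (I x) (J y) < ε := fun x => by
    obtain ⟨_, ⟨y, rfl⟩, hy⟩ := mem_thickening_iff.1 (h (mem_range_self x))
    exact ⟨y, hy⟩
  choose f hf using hclose
  exact ⟨f, hf⟩

theorem subset_thickening_of_hausdorffDist_lt {s t : Set E}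
    (hfin : hausdorffEDist s t ≠ ⊤) (h : hausdorffDist s t < ε) :
    s ⊆ thickening ε t := fun _ hx =>
  mem_thickening_iff.2 (exists_dist_lt_of_hausdorffDist_lt hx h hfin)

theorem exists_dist_lt_and_dist_lt_two_mul_of_hausdorffDist_lt
    (hfin : hausdorffEDist (range I) (range J) ≠ ⊤)
    (h : hausdorffDist (range I) (range J) < ε) :
    ∃ f : X → Y, (∀ x, dist (I x) (J (f x)) < ε) ∧
      ∀ y, ∃ x, dist (J (f x)) (J y) < 2 * ε := by
  obtain ⟨f, hf⟩ :=
    exists_dist_lt_of_range_subset_thickening (subset_thickening_of_hausdorffDist_lt hfin h)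
  refine ⟨f, hf, fun y => ?_⟩
  obtain ⟨_, ⟨x, rfl⟩, hx⟩ := exists_dist_lt_of_hausdorffDist_lt' (mem_range_self y) h hfin
  refine ⟨x, ?_⟩
  calc dist (J (f x)) (J y) ≤ dist (I x) (J (f x)) + dist (I x) (J y) := dist_triangle_left _ _ _
    _ < 2 * ε := by linarith [hf x]

end

theorem hausdorffEDist_range_ne_top {X Y E : Type*} [TopologicalSpace X] [CompactSpace X]
    [Nonempty X] [TopologicalSpace Y] [CompactSpace Y] [Nonempty Y] [PseudoMetricSpace E]
    {I : X → E} {J : Y → E} (hI : Continuous I) (hJ : Continuous J) :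
    hausdorffEDist (range I) (range J) ≠ ⊤ :=
  hausdorffEDist_ne_top_of_nonempty_of_bounded (range_nonempty I) (range_nonempty J)
    (isCompact_range hI).isBounded (isCompact_range hJ).isBounded

theorem hausdorff_to_spectral_approx_general
    {X Y : Type*} [MetricSpace X] [CompactSpace X] [Nonempty X]
    [MetricSpace Y] [CompactSpace Y] [Nonempty Y]
    (I : X → lp (fun _ : ℕ => ℝ) 2) (J : Y → lp (fun _ : ℕ => ℝ) 2)
    (hI : Continuous I) (hJ : Continuous J)
    (ε : ℝ) :
    ((Set.range I ⊆ Metric.thickening ε (Set.range J)) →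
      ∃ f : X → Y, ∀ x : X, ‖I x - J (f x)‖ < 5 * ε) ∧
    ((Metric.hausdorffDist (Set.range I) (Set.range J) < ε) →
      ∃ f : X → Y, (∀ x : X, ‖I x - J (f x)‖ < 5 * ε) ∧
        ∀ y : Y, ∃ x : X, ‖J (f x) - J y‖ < 5 * ε) := by
  simp only [← dist_eq_norm]
  refine ⟨fun h => ?_, fun h => ?_⟩
  · obtain ⟨f, hf⟩ := exists_dist_lt_of_range_subset_thickening h
    exact ⟨f, fun x => by linarith [hf x, dist_nonneg (x := I x) (y := J (f x))]⟩
  · obtain ⟨f, hf, hdense⟩ :=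
      exists_dist_lt_and_dist_lt_two_mul_of_hausdorffDist_lt (hausdorffEDist_range_ne_top hI hJ) h
    have hε : 0 < ε := dist_nonneg.trans_lt (hf (Classical.arbitrary X))
    refine ⟨f, fun x => by linarith [hf x], fun y => ?_⟩
    obtain ⟨x, hx⟩ := hdense y
    exact ⟨x, by linarith⟩

/-- Closeness of the images of `I` and `J` yields spectral (weak) approximations. -/
theorem hausdorff_to_spectral_approx
    {X Y : Type*} [MetricSpace X] [CompactSpace X] [Nonempty X]
    [MetricSpace Y] [CompactSpace Y] [Nonempty Y]
    (I : X → lp (fun _ : ℕ => ℝ) 2) (J : Y → lp (fun _ : ℕ => ℝ) 2)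
    (hI : Continuous I) (hJ : Continuous J)
    (ε : ℝ) (hε : 0 < ε) :
    ((Set.range I ⊆ Metric.thickening ε (Set.range J)) →
      ∃ f : X → Y, ∀ x : X, ‖I x - J (f x)‖ < 5 * ε) ∧
    ((Metric.hausdorffDist (Set.range I) (Set.range J) < ε) →
      ∃ f : X → Y, (∀ x : X, ‖I x - J (f x)‖ < 5 * ε) ∧
        ∀ y : Y, ∃ x : X, ‖J (f x) - J y‖ < 5 * ε) :=
  hausdorff_to_spectral_approx_general I J hI hJ ε
end
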